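/- arXiv:1302.4632 — 4 statements merged into one kernel-verified Lean document; each statement's English description precedes it below -/
import Mathlib

section
/- Assume q satisfies Condition A, and let (λ_n)_{n≥1} be an enumeration of the zeros of the entire function a, counted with multiplicity (all zeros lie in the open lower half-plane, so λ_n ≠ 0). Then Σ_{n≥1} |Im λ_n| / |λ_n|² < ∞. -/
open MeasureTheory Set Filter

noncomputable def Gker (q : ℝ → ℂ) (x s : ℝ) (l : ℂ) : ℂ :=
  (starRingEnd ℂ) (q s) *
    ∫ t in x..s, Complex.exp (2 * Complex.I * l * ((s : ℂ) - (t : ℂ))) * q t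

noncomputable def chiIter (q : ℝ → ℂ) : ℕ → ℝ → ℂ → ℂ
  | 0, _, _ => 1
  | n + 1, x, l => ∫ s in Set.Ioi x, Gker q x s l * chiIter q n s l

noncomputable def chiFun (q : ℝ → ℂ) (x : ℝ) (l : ℂ) : ℂ :=
  1 + ∑' n : ℕ, chiIter q (n + 1) x l

noncomputable def aFun (q : ℝ → ℂ) (l : ℂ) : ℂ := chiFun q 0 l

def CondA (q : ℝ → ℂ) (γ : ℝ) : Prop :=
  0 < γ ∧ convexHull ℝ (tsupport q) = Set.Icc 0 γ

noncomputable def normL1 (q : ℝ → ℂ) : ℝ := ∫ t : ℝ, ‖q t‖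
noncomputable def normL2 (q : ℝ → ℂ) : ℝ := Real.sqrt (∫ t : ℝ, ‖q t‖ ^ 2)
noncomputable def PhiF (q : ℝ → ℂ) (x : ℝ) : ℝ := Real.cosh (∫ s in Set.Ioi x, ‖q s‖)

def ZeroOrder (f : ℂ → ℂ) (z : ℂ) (m : ℕ) : Prop :=
  ∃ g : ℂ → ℂ, Differentiable ℂ g ∧ g z ≠ 0 ∧ ∀ w, f w = (w - z) ^ m * g w

/-!
Iterating the kernel over `x < s₁ < ⋯ < sₙ` produces a factor `1 / n!`, so the Neumann series
for `χ(0, λ)` converges with `|a(λ)| ≤ M e^{2γ max(0, -Im λ)}`. Hence `a` is bounded on the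
closed upper half-plane, and so is `λ ↦ a(-λ) e^{2iγλ}`, whose zeros are the reflected zeros
of `a` in the lower half-plane.

For `f` bounded by `M` on the closed upper half-plane and finitely many zeros `z` there,
dividing `f` by the Blaschke product `∏ ((w - z) / (w - z̄))^{m_z}` does not change `|f|` on
the real axis, so Phragmén–Lindelöf gives `|f(w)| ∏ |w - z̄|^{m_z} ≤ M ∏ |w - z|^{m_z}`.
Taking logarithms at a fixed `w` with `f(w) ≠ 0` bounds `∑ m_z Im z / |z|²` over the zeros
with `|z| ≥ 1` independently of the finite set chosen. Only finitely many zeros lie in the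
unit disc.
-/

open Complex ComplexConjugate

section TailIntegral

theorem setIntegral_Ioi_mul_setIntegral_Ioi {f g : ℝ → ℝ} (hf : Integrable f)
    (hg : Integrable g) (x : ℝ) :
    ∫ s in Ioi x, f s * ∫ t in Ioi s, g t = ∫ t in Ioi x, g t * ∫ s in Ioo x t, f s := by
  set F : ℝ → ℝ → ℝ := fun s t =>
    {p : ℝ × ℝ | p.1 < p.2}.indicator (fun p => f p.1 * g p.2) (s, t)
  have hF : Integrable (Function.uncurry F) ((volume.restrict (Ioi x)).prod volume) :=
    (hf.restrict.mul_prod hg).indicator (measurableSet_lt measurable_fst measurable_snd)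
  have hleft (s : ℝ) : f s * ∫ t in Ioi s, g t = ∫ t, F s t := by
    rw [← integral_const_mul, ← integral_indicator measurableSet_Ioi]
    congr 1 with t
  have hright (t : ℝ) :
      ∫ s in Ioi x, F s t = (Ioi x).indicator (fun t => g t * ∫ s in Ioo x t, f s) t := by
    by_cases ht : x < t
    · rw [indicator_of_mem (mem_Ioi.2 ht), ← Iio_inter_Ioi,
        ← Measure.restrict_restrict measurableSet_Iio, ← integral_indicator measurableSet_Iio,
        ← integral_const_mul]
      congr 1 with s
      by_cases h : s < t <;> simp [F, h, mul_comm]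
    · rw [indicator_of_notMem (notMem_Ioi.2 (not_lt.1 ht))]
      refine setIntegral_eq_zero_of_forall_eq_zero fun s hs => ?_
      simp [F, show ¬ s < t from fun h => ht (lt_trans hs h)]
  simp_rw [hleft]
  rw [integral_integral_swap hF, ← integral_indicator measurableSet_Ioi]
  simp_rw [hright]

theorem setIntegral_Ioo_eq_sub {f : ℝ → ℝ} (hf : Integrable f) {x t : ℝ} (hxt : x ≤ t) :
    ∫ s in Ioo x t, f s = (∫ s in Ioi x, f s) - ∫ s in Ioi t, f s := by
  rw [← integral_Ioc_eq_integral_Ioo, ← intervalIntegral.integral_of_le hxt]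
  exact (intervalIntegral.integral_Ioi_sub_Ioi hf.integrableOn hxt).symm

variable {g : ℝ → ℝ}

theorem integrable_mul_setIntegral_Ioi_pow (hg : Integrable g) (hg0 : 0 ≤ g) (n : ℕ) :
    Integrable fun s => g s * (∫ t in Ioi s, g t) ^ n := by
  have hanti : Antitone fun s => ∫ t in Ioi s, g t := fun x y hxy =>
    setIntegral_mono_set hg.integrableOn (.of_forall hg0) (Ioi_subset_Ioi hxy).eventuallyLE
  refine hg.mul_bdd (hanti.measurable.pow_const n).aestronglyMeasurable (c := (∫ t, g t) ^ n)
    (.of_forall fun s => ?_)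
  have h0 : 0 ≤ ∫ t in Ioi s, g t := setIntegral_nonneg measurableSet_Ioi fun t _ => hg0 t
  rw [Real.norm_eq_abs, abs_of_nonneg (pow_nonneg h0 n)]
  exact pow_le_pow_left₀ h0 (setIntegral_le_integral hg (.of_forall hg0)) n

theorem setIntegral_Ioi_mul_setIntegral_Ioi_pow (hg : Integrable g) (hg0 : 0 ≤ g) (n : ℕ)
    (x : ℝ) :
    ∫ s in Ioi x, g s * (∫ t in Ioi s, g t) ^ n = (∫ t in Ioi x, g t) ^ (n + 1) / (n + 1) := by
  induction n generalizing x with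
  | zero => simp
  | succ n ih =>
    set T : ℝ → ℝ := fun s => ∫ t in Ioi s, g t
    set J : ℝ := ∫ s in Ioi x, g s * T s ^ (n + 1)
    have hint := integrable_mul_setIntegral_Ioi_pow hg hg0
    have hJ : J = T x ^ (n + 2) / (n + 1) - J / (n + 1) := calc
      J = ∫ s in Ioi x, g s * T s ^ n * T s := by simp only [J, pow_succ, mul_assoc]
      _ = ∫ t in Ioi x, g t * ∫ s in Ioo x t, g s * T s ^ n :=
        setIntegral_Ioi_mul_setIntegral_Ioi (hint n) hg x
      _ = ∫ t in Ioi x, (T x ^ (n + 1) / (n + 1) * g t - g t * T t ^ (n + 1) / (n + 1)) := by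
        refine setIntegral_congr_fun measurableSet_Ioi fun t ht => ?_
        rw [setIntegral_Ioo_eq_sub (hint n) (le_of_lt ht), ih, ih]
        ring
      _ = T x ^ (n + 2) / (n + 1) - J / (n + 1) := by
        rw [integral_sub (hg.integrableOn.const_mul _) ((hint _).integrableOn.div_const _),
          integral_const_mul, integral_div]
        ring
    push_cast
    field_simp at hJ ⊢
    linarith

end TailIntegral

section Iterates

variable {q : ℝ → ℂ}

theorem norm_cexp_two_mul_I_mul_le (l : ℂ) {u v : ℝ} (hu : 0 ≤ u) (huv : u ≤ v) :
    ‖cexp (2 * I * l * u)‖ ≤ Real.exp (2 * max 0 (-l.im) * v) := by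
  rw [norm_exp, Real.exp_le_exp, show (2 * I * l * u).re = 2 * -l.im * u by simp]
  gcongr
  exact le_max_right _ _

theorem norm_Gker_le (hq : Integrable q) {x s : ℝ} (hxs : x ≤ s) (l : ℂ) :
    ‖Gker q x s l‖ ≤ ‖q s‖ * (Real.exp (2 * max 0 (-l.im) * (s - x)) * normL1 q) := by
  rw [Gker, norm_mul, Complex.norm_conj]
  gcongr
  calc ‖∫ t in x..s, cexp (2 * I * l * ((s : ℂ) - (t : ℂ))) * q t‖
      ≤ ∫ t in x..s, Real.exp (2 * max 0 (-l.im) * (s - x)) * ‖q t‖ := by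
        refine intervalIntegral.norm_integral_le_of_norm_le hxs (.of_forall fun t ht => ?_)
          (hq.norm.intervalIntegrable.const_mul _)
        rw [norm_mul, ← ofReal_sub]
        gcongr
        exact norm_cexp_two_mul_I_mul_le l (by linarith [ht.2]) (by linarith [ht.1])
    _ ≤ Real.exp (2 * max 0 (-l.im) * (s - x)) * normL1 q := by
        rw [intervalIntegral.integral_const_mul, intervalIntegral.integral_of_le hxs]
        gcongr
        exact setIntegral_le_integral hq.norm (.of_forall fun t => norm_nonneg _)

theorem norm_chiIter_le (hq : Integrable q) {γ : ℝ} (hsupp : ∀ s, q s ≠ 0 → s ≤ γ) (l : ℂ)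
    (n : ℕ) {x : ℝ} (hx : x ≤ γ) :
    ‖chiIter q n x l‖ ≤ Real.exp (2 * max 0 (-l.im) * (γ - x)) *
      (normL1 q * ∫ t in Ioi x, ‖q t‖) ^ n / n.factorial := by
  have hQ : 0 ≤ normL1 q := integral_nonneg fun _ => norm_nonneg _
  have hR (s : ℝ) : 0 ≤ ∫ t in Ioi s, ‖q t‖ :=
    setIntegral_nonneg measurableSet_Ioi fun _ _ => norm_nonneg _
  induction n generalizing x with
  | zero => simpa [chiIter] using Real.one_le_exp (by nlinarith [le_max_left 0 (-l.im)])
  | succ n ih =>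
    set C := Real.exp (2 * max 0 (-l.im) * (γ - x)) * normL1 q ^ (n + 1) / n.factorial
    have hpoint : ∀ s ∈ Ioi x,
        ‖Gker q x s l * chiIter q n s l‖ ≤ C * (‖q s‖ * (∫ t in Ioi s, ‖q t‖) ^ n) := by
      intro s hs
      by_cases hqs : q s = 0
      · simp [Gker, hqs]
      calc ‖Gker q x s l * chiIter q n s l‖
          ≤ ‖q s‖ * (Real.exp (2 * max 0 (-l.im) * (s - x)) * normL1 q) *
            (Real.exp (2 * max 0 (-l.im) * (γ - s)) *
              (normL1 q * ∫ t in Ioi s, ‖q t‖) ^ n / n.factorial) := by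
            rw [norm_mul]
            exact mul_le_mul (norm_Gker_le hq (le_of_lt hs) l) (ih (hsupp s hqs))
              (norm_nonneg _) (mul_nonneg (norm_nonneg _) (by positivity))
        _ = C * (‖q s‖ * (∫ t in Ioi s, ‖q t‖) ^ n) := by
            simp only [C]
            rw [show γ - x = (s - x) + (γ - s) by ring, mul_add, Real.exp_add]
            ring
    have hint := (integrable_mul_setIntegral_Ioi_pow hq.norm (fun _ => norm_nonneg _) n)
    calc ‖chiIter q (n + 1) x l‖
        ≤ ∫ s in Ioi x, C * (‖q s‖ * (∫ t in Ioi s, ‖q t‖) ^ n) :=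
          norm_integral_le_of_norm_le (hint.integrableOn.const_mul C)
            ((ae_restrict_mem measurableSet_Ioi).mono hpoint)
      _ = _ := by
          rw [integral_const_mul, setIntegral_Ioi_mul_setIntegral_Ioi_pow hq.norm
            (fun _ => norm_nonneg _), Nat.factorial_succ]
          simp only [C]
          push_cast
          field_simp
          ring

theorem norm_aFun_le (hq : Integrable q) {γ : ℝ} (hγ : 0 ≤ γ) (hsupp : ∀ s, q s ≠ 0 → s ≤ γ)
    (l : ℂ) :
    ‖aFun q l‖ ≤
      Real.exp (normL1 q * ∫ t in Ioi 0, ‖q t‖) * Real.exp (2 * γ * max 0 (-l.im)) := by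
  set a := normL1 q * ∫ t in Ioi 0, ‖q t‖
  set E := Real.exp (2 * γ * max 0 (-l.im))
  have hbound (n : ℕ) : ‖chiIter q n 0 l‖ ≤ E * (a ^ n / n.factorial) := by
    convert norm_chiIter_le hq hsupp l n hγ using 1
    simp only [E, a]
    ring_nf
  have hexp : HasSum (fun n : ℕ => E * (a ^ n / n.factorial)) (E * Real.exp a) :=
    (Real.exp_eq_exp_ℝ ▸ NormedSpace.expSeries_div_hasSum_exp a).mul_left E
  have hsum : Summable fun n => chiIter q n 0 l := .of_norm_bounded hexp.summable hbound
  calc ‖aFun q l‖ = ‖∑' n, chiIter q n 0 l‖ := by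
        rw [hsum.tsum_eq_zero_add]
        rfl
    _ ≤ E * Real.exp a := tsum_of_norm_bounded hexp hbound
    _ = Real.exp a * E := mul_comm _ _

end Iterates

def VanishesToOrder (f : ℂ → ℂ) (z : ℂ) (m : ℕ) : Prop :=
  ∃ g : ℂ → ℂ, Differentiable ℂ g ∧ ∀ w, f w = (w - z) ^ m * g w

section Division

variable {f : ℂ → ℂ} {z : ℂ} {m : ℕ}

theorem VanishesToOrder.differentiable (h : VanishesToOrder f z m) : Differentiable ℂ f := by
  obtain ⟨g, hg, hfg⟩ := h
  rw [funext hfg]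
  fun_prop

theorem ZeroOrder.vanishesToOrder (h : ZeroOrder f z m) : VanishesToOrder f z m :=
  let ⟨g, hg, _, hfg⟩ := h
  ⟨g, hg, hfg⟩

theorem ZeroOrder.exists_ne_zero (h : ZeroOrder f z m) : ∃ w, f w ≠ 0 := by
  obtain ⟨g, hg, hgz, hfg⟩ := h
  by_contra! hf
  refine hgz (congrFun (Continuous.ext_on (dense_compl_singleton z) hg.continuous
    continuous_const fun w hw => ?_) z)
  simpa [hf w, sub_ne_zero.2 hw] using (hfg w).symm

theorem ZeroOrder.pos_of_eq_zero (h : ZeroOrder f z m) (hz : f z = 0) : 0 < m := by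
  obtain ⟨g, -, hgz, hfg⟩ := h
  refine Nat.pos_of_ne_zero fun hm => hgz ?_
  simpa [hm, hz] using (hfg z).symm

theorem vanishesToOrder_of_mul_eq_pow_mul {P g : ℂ → ℂ} (hP : Continuous P) (hPz : P z ≠ 0)
    (hf : Differentiable ℂ f) (hg : Continuous g) (h : ∀ w, P w * f w = (w - z) ^ m * g w) :
    VanishesToOrder f z m := by
  induction m generalizing f with
  | zero => exact ⟨f, hf, by simp⟩
  | succ m ih =>
    have hfz : f z = 0 := by simpa [hPz] using h z
    have hfac (w : ℂ) : f w = (w - z) * dslope f z w := by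
      simpa [hfz] using (sub_smul_dslope f z w).symm
    have hd : Differentiable ℂ (dslope f z) := fun w =>
      ((differentiableOn_dslope univ_mem).2 hf.differentiableOn w (mem_univ w)).differentiableAt
        univ_mem
    have hd' : ∀ w, P w * dslope f z w = (w - z) ^ m * g w := by
      refine congrFun (Continuous.ext_on (dense_compl_singleton z) (hP.mul hd.continuous)
        (by fun_prop) fun w hw => ?_)
      apply mul_left_cancel₀ (sub_ne_zero.2 hw)
      linear_combination h w - P w * hfac w
    obtain ⟨k, hk, hdk⟩ := ih hd hd'
    exact ⟨k, hk, fun w => by rw [hfac, hdk, pow_succ]; ring⟩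

theorem exists_eq_prod_pow_mul (hf : Differentiable ℂ f) (m : ℂ → ℕ) (S : Finset ℂ)
    (hS : ∀ z ∈ S, VanishesToOrder f z (m z)) :
    ∃ h : ℂ → ℂ, Differentiable ℂ h ∧ ∀ w, f w = (∏ z ∈ S, (w - z) ^ m z) * h w := by
  classical
  induction S using Finset.induction_on with
  | empty => exact ⟨f, hf, by simp⟩
  | insert z₀ S hz₀ ih =>
    obtain ⟨h, hh, hfh⟩ := ih fun z hz => hS z (Finset.mem_insert_of_mem hz)
    obtain ⟨g, hg, hfg⟩ := hS z₀ (Finset.mem_insert_self _ _)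
    have hPz₀ : ∏ z ∈ S, (z₀ - z) ^ m z ≠ 0 := Finset.prod_ne_zero_iff.2 fun z hz =>
      pow_ne_zero _ (sub_ne_zero.2 (ne_of_mem_of_not_mem hz hz₀).symm)
    obtain ⟨k, hk, hhk⟩ := vanishesToOrder_of_mul_eq_pow_mul (by fun_prop) hPz₀ hh
      hg.continuous fun w => (hfh w).symm.trans (hfg w)
    exact ⟨k, hk, fun w => by rw [Finset.prod_insert hz₀, hfh, hhk]; ring⟩

end Division

section UpperHalfPlane

theorem upperHalfPlane_norm_le_of_bounded_on_real {Φ : ℂ → ℂ} (hΦ : Differentiable ℂ Φ)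
    {M C R : ℝ} (hreal : ∀ x : ℝ, ‖Φ x‖ ≤ M) (hfar : ∀ w, 0 ≤ w.im → R ≤ ‖w‖ → ‖Φ w‖ ≤ C)
    {w : ℂ} (hw : 0 ≤ w.im) : ‖Φ w‖ ≤ M := by
  set Ψ : ℂ → ℂ := fun z => Φ (I * z)
  have hfarΨ (z : ℂ) (hz : 0 ≤ z.re) (hR : R ≤ ‖z‖) : ‖Ψ z‖ ≤ C :=
    hfar _ (by simpa using hz) (by simpa using hR)
  have hbigO : Ψ =O[Bornology.cobounded ℂ ⊓ 𝓟 {z | 0 < z.re}]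
      fun z => Real.exp (0 * ‖z‖ ^ (1 : ℝ)) := by
    refine Asymptotics.IsBigO.of_bound C ?_
    filter_upwards [mem_inf_of_left (tendsto_norm_cobounded_atTop.eventually_ge_atTop R),
      mem_inf_of_right (mem_principal_self _)] with z hzR hzre
    simpa using hfarΨ z (le_of_lt hzre) hzR
  have hpos : IsBoundedUnder (· ≤ ·) atTop fun x : ℝ => ‖Ψ x‖ := by
    refine isBoundedUnder_of_eventually_le (a := C)
      ((eventually_ge_atTop (max R 0)).mono fun x hx => ?_)
    have hx0 : 0 ≤ x := le_of_max_le_right hx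
    exact hfarΨ x (by simpa using hx0) (by simpa [abs_of_nonneg hx0] using le_of_max_le_left hx)
  have him (x : ℝ) : ‖Ψ (x * I)‖ ≤ M := by
    have hx : I * (x * I) = ((-x : ℝ) : ℂ) := by push_cast; ring_nf; rw [I_sq]; ring
    simpa only [Ψ, hx] using hreal (-x)
  have hw' : I * (-I * w) = w := by ring_nf; rw [I_sq]; ring
  simpa only [Function.comp_apply, hw'] using PhragmenLindelof.right_half_plane_of_bounded_on_real
    (hΦ.comp (by fun_prop)).diffContOnCl ⟨1, one_lt_two, 0, hbigO⟩ hpos him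
    (z := -I * w) (by simpa using hw)

theorem norm_ofReal_sub_conj (x : ℝ) (z : ℂ) : ‖(x : ℂ) - conj z‖ = ‖(x : ℂ) - z‖ := by
  rw [← Complex.norm_conj, map_sub, conj_conj, conj_ofReal]

theorem norm_sub_conj_le_norm_add_norm (w z : ℂ) : ‖w - conj z‖ ≤ ‖w‖ + ‖z‖ :=
  (norm_sub_le _ _).trans_eq (by rw [Complex.norm_conj])

theorem norm_sub_conj_le_three_mul {w z : ℂ} (h : 2 * ‖z‖ ≤ ‖w‖) :
    ‖w - conj z‖ ≤ 3 * ‖w - z‖ := by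
  linarith [norm_sub_norm_le w z, norm_sub_conj_le_norm_add_norm w z]

theorem norm_mul_prod_le_of_upperHalfPlane {f : ℂ → ℂ} (hf : Differentiable ℂ f) {M : ℝ}
    (hM : ∀ w, 0 ≤ w.im → ‖f w‖ ≤ M) (m : ℂ → ℕ) {S : Finset ℂ} (hS : ∀ z ∈ S, 0 < z.im)
    (hdvd : ∀ z ∈ S, VanishesToOrder f z (m z)) {w : ℂ} (hw : 0 ≤ w.im) :
    ‖f w‖ * ∏ z ∈ S, ‖w - conj z‖ ^ m z ≤ M * ∏ z ∈ S, ‖w - z‖ ^ m z := by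
  obtain ⟨h, hh, hfh⟩ := exists_eq_prod_pow_mul hf m S hdvd
  -- `Φ` is `f` divided by the Blaschke product of the zeros in `S`.
  set Φ : ℂ → ℂ := fun w => h w * ∏ z ∈ S, (w - conj z) ^ m z
  have hnorm (w : ℂ) :
      ‖f w‖ * ∏ z ∈ S, ‖w - conj z‖ ^ m z = ‖Φ w‖ * ∏ z ∈ S, ‖w - z‖ ^ m z := by
    simp only [Φ, hfh, norm_mul, norm_prod, norm_pow]
    ring
  have hM0 : 0 ≤ M := (norm_nonneg _).trans (hM 0 le_rfl)
  have hreal (x : ℝ) : ‖Φ x‖ ≤ M := by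
    have hP : 0 < ∏ z ∈ S, ‖(x : ℂ) - z‖ ^ m z := Finset.prod_pos fun z hz =>
      pow_pos (norm_pos_iff.2 (sub_ne_zero.2 fun hxz => (hS z hz).ne' (by simp [← hxz]))) _
    have hx := hnorm x
    simp only [norm_ofReal_sub_conj] at hx
    rw [← mul_right_cancel₀ hP.ne' hx]
    exact hM x (by simp)
  have hfar (w : ℂ) (hw : 0 ≤ w.im) (hR : 1 + 2 * ∑ z ∈ S, ‖z‖ ≤ ‖w‖) :
      ‖Φ w‖ ≤ M * ∏ z ∈ S, 3 ^ m z := by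
    have hzS (z : ℂ) (hz : z ∈ S) : 2 * ‖z‖ ≤ ‖w‖ ∧ 0 < ‖w - z‖ := by
      have := Finset.single_le_sum (fun z _ => norm_nonneg z) hz
      constructor <;> linarith [norm_sub_norm_le w z, norm_nonneg z]
    have hP : 0 < ∏ z ∈ S, ‖w - z‖ ^ m z := Finset.prod_pos fun z hz => pow_pos (hzS z hz).2 _
    refine le_of_mul_le_mul_right ?_ hP
    calc ‖Φ w‖ * ∏ z ∈ S, ‖w - z‖ ^ m z = ‖f w‖ * ∏ z ∈ S, ‖w - conj z‖ ^ m z := (hnorm w).symm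
      _ ≤ M * ∏ z ∈ S, (3 * ‖w - z‖) ^ m z := by
          gcongr with z hz
          · exact hM w hw
          · exact norm_sub_conj_le_three_mul (hzS z hz).1
      _ = M * (∏ z ∈ S, 3 ^ m z) * ∏ z ∈ S, ‖w - z‖ ^ m z := by
          simp only [mul_pow, Finset.prod_mul_distrib]
          ring
  calc ‖f w‖ * ∏ z ∈ S, ‖w - conj z‖ ^ m z = ‖Φ w‖ * ∏ z ∈ S, ‖w - z‖ ^ m z := hnorm w
    _ ≤ M * ∏ z ∈ S, ‖w - z‖ ^ m z := by
        gcongr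
        exact upperHalfPlane_norm_le_of_bounded_on_real (by fun_prop) hreal hfar hw

theorem mul_im_div_sq_norm_le_log_sub_log {w z : ℂ} (hw : 0 < w.im) (hz : 0 < z.im)
    (hz1 : 1 ≤ ‖z‖) (hwz : w ≠ z) :
    2 * w.im / (1 + ‖w‖) ^ 2 * (z.im / ‖z‖ ^ 2) ≤
      Real.log ‖w - conj z‖ - Real.log ‖w - z‖ := by
  set A := ‖w - z‖ ^ 2
  set B := ‖w - conj z‖ ^ 2
  have hA : 0 < A := pow_pos (norm_pos_iff.2 (sub_ne_zero.2 hwz)) 2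
  have hBA : B - A = 4 * w.im * z.im := by
    simp only [A, B, Complex.sq_norm, normSq_apply, sub_re, sub_im, conj_re, conj_im]
    ring
  have hB : B ≤ ((1 + ‖w‖) * ‖z‖) ^ 2 := pow_le_pow_left₀ (norm_nonneg _)
    ((norm_sub_conj_le_norm_add_norm w z).trans (by nlinarith [norm_nonneg w])) 2
  have hB0 : 0 < B := by nlinarith
  have hlog : 1 - A / B ≤ 2 * (Real.log ‖w - conj z‖ - Real.log ‖w - z‖) := by
    have := Real.log_le_sub_one_of_pos (div_pos hA hB0)
    rw [Real.log_div hA.ne' hB0.ne', Real.log_pow, Real.log_pow] at this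
    push_cast at this
    linarith
  calc 2 * w.im / (1 + ‖w‖) ^ 2 * (z.im / ‖z‖ ^ 2)
      = 2 * w.im * z.im / ((1 + ‖w‖) * ‖z‖) ^ 2 := by rw [mul_pow, div_mul_div_comm]
    _ ≤ 2 * w.im * z.im / B := by gcongr
    _ = (1 - A / B) / 2 := by rw [← div_self hB0.ne', ← sub_div, hBA]; ring
    _ ≤ Real.log ‖w - conj z‖ - Real.log ‖w - z‖ := by linarith

theorem Differentiable.exists_im_pos_ne_zero {f : ℂ → ℂ} (hf : Differentiable ℂ f)
    (hne : ∃ w, f w ≠ 0) : ∃ w, 0 < w.im ∧ f w ≠ 0 := by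
  by_contra! h
  obtain ⟨w, hw⟩ := hne
  refine hw ((hf.differentiableOn.analyticOnNhd isOpen_univ)
    |>.eqOn_zero_of_preconnected_of_eventuallyEq_zero isPreconnected_univ (mem_univ I) ?_
    (mem_univ w))
  filter_upwards [(continuous_im.isOpen_preimage _ isOpen_Ioi).mem_nhds
    (by simp : I ∈ im ⁻¹' Ioi 0)] with z hz using h z hz

theorem exists_sum_im_div_sq_norm_le {f : ℂ → ℂ} (hf : Differentiable ℂ f) {M : ℝ}
    (hM : ∀ w, 0 ≤ w.im → ‖f w‖ ≤ M) (hne : ∃ w, f w ≠ 0) (m : ℂ → ℕ)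
    (hm : ∀ z, f z = 0 → VanishesToOrder f z (m z)) :
    ∃ C, ∀ S : Finset ℂ, (∀ z ∈ S, 0 < z.im ∧ 1 ≤ ‖z‖ ∧ f z = 0) →
      ∑ z ∈ S, (m z : ℝ) * (z.im / ‖z‖ ^ 2) ≤ C := by
  obtain ⟨w, hw, hfw⟩ := hf.exists_im_pos_ne_zero hne
  set c := (1 + ‖w‖) ^ 2 / (2 * w.im)
  refine ⟨c * (Real.log M - Real.log ‖f w‖), fun S hS => ?_⟩
  have hwS (z : ℂ) (hz : z ∈ S) : w ≠ z := fun h => hfw (h ▸ (hS z hz).2.2)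
  have hconj (z : ℂ) (hz : z ∈ S) : ‖w - conj z‖ ^ m z ≠ 0 := by
    refine pow_ne_zero _ (norm_ne_zero_iff.2 fun h => ?_)
    have := congrArg im h
    simp only [sub_im, conj_im, zero_im] at this
    linarith [(hS z hz).1]
  have hsub (z : ℂ) (hz : z ∈ S) : ‖w - z‖ ^ m z ≠ 0 :=
    pow_ne_zero _ (norm_ne_zero_iff.2 (sub_ne_zero.2 (hwS z hz)))
  have hlog : ∑ z ∈ S, (m z : ℝ) * (Real.log ‖w - conj z‖ - Real.log ‖w - z‖)
      ≤ Real.log M - Real.log ‖f w‖ := by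
    have hprod := norm_mul_prod_le_of_upperHalfPlane hf hM m (fun z hz => (hS z hz).1)
      (fun z hz => hm z (hS z hz).2.2) hw.le
    have hpos : 0 < ‖f w‖ * ∏ z ∈ S, ‖w - conj z‖ ^ m z :=
      mul_pos (norm_pos_iff.2 hfw)
        (Finset.prod_pos fun z hz => (pow_nonneg (norm_nonneg _) _).lt_of_ne (hconj z hz).symm)
    have hM0 : M ≠ 0 := by
      rintro rfl
      linarith [hpos.trans_le hprod]
    have := Real.log_le_log hpos hprod
    rw [Real.log_mul (norm_ne_zero_iff.2 hfw) (Finset.prod_ne_zero_iff.2 hconj),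
      Real.log_prod hconj, Real.log_mul hM0 (Finset.prod_ne_zero_iff.2 hsub),
      Real.log_prod hsub] at this
    simp only [Real.log_pow, Finset.sum_sub_distrib, mul_sub] at this ⊢
    linarith
  calc ∑ z ∈ S, (m z : ℝ) * (z.im / ‖z‖ ^ 2)
      ≤ ∑ z ∈ S, (m z : ℝ) * (c * (Real.log ‖w - conj z‖ - Real.log ‖w - z‖)) := by
        refine Finset.sum_le_sum fun z hz => mul_le_mul_of_nonneg_left ?_ (Nat.cast_nonneg _)
        have := mul_im_div_sq_norm_le_log_sub_log hw (hS z hz).1 (hS z hz).2.1 (hwS z hz)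
        rw [div_mul_eq_mul_div, div_le_iff₀ (by positivity)] at this
        rw [div_mul_eq_mul_div, le_div_iff₀ (by positivity)]
        linarith
    _ = c * ∑ z ∈ S, (m z : ℝ) * (Real.log ‖w - conj z‖ - Real.log ‖w - z‖) := by
        rw [Finset.mul_sum]
        exact Finset.sum_congr rfl fun z _ => by ring
    _ ≤ c * (Real.log M - Real.log ‖f w‖) := by gcongr

end UpperHalfPlane

section BlaschkeCondition

variable {f : ℂ → ℂ}

theorem Differentiable.finite_setOf_eq_zero_of_isCompact (hf : Differentiable ℂ f)
    (hne : ∃ w, f w ≠ 0) {K : Set ℂ} (hK : IsCompact K) : {z ∈ K | f z = 0}.Finite := by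
  rcases (hf.differentiableOn.analyticOnNhd isOpen_univ)
    |>.eqOn_zero_or_eventually_ne_zero_of_preconnected isPreconnected_univ with h | h
  · obtain ⟨w, hw⟩ := hne
    exact absurd (h (mem_univ w)) hw
  · convert hK.finite_sdiff_of_mem_codiscreteWithin (codiscreteWithin_mono (subset_univ K) h)
      using 1
    ext z
    simp

theorem exists_sum_neg_im_div_sq_norm_le (hf : Differentiable ℂ f) (hne : ∃ w, f w ≠ 0)
    {M c : ℝ} (hM : ∀ w, ‖f w‖ ≤ M * Real.exp (c * max 0 (-w.im))) (m : ℂ → ℕ)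
    (hm : ∀ z, f z = 0 → VanishesToOrder f z (m z)) :
    ∃ C, ∀ S : Finset ℂ, (∀ z ∈ S, z.im < 0 ∧ 1 ≤ ‖z‖ ∧ f z = 0) →
      ∑ z ∈ S, (m z : ℝ) * (-z.im / ‖z‖ ^ 2) ≤ C := by
  set G : ℂ → ℂ := fun w => f (-w) * cexp (c * I * w)
  have hGM (w : ℂ) (hw : 0 ≤ w.im) : ‖G w‖ ≤ M := by
    have hexp : ‖cexp (c * I * w)‖ = Real.exp (-(c * w.im)) := by
      rw [norm_exp]
      simp
    calc ‖G w‖ ≤ M * Real.exp (c * w.im) * Real.exp (-(c * w.im)) := by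
          rw [norm_mul, hexp]
          gcongr
          simpa [max_eq_right hw] using hM (-w)
      _ = M := by rw [mul_assoc, ← Real.exp_add, add_neg_cancel, Real.exp_zero, mul_one]
  have hGne : ∃ w, G w ≠ 0 := by
    obtain ⟨w, hw⟩ := hne
    exact ⟨-w, by simpa [G] using hw⟩
  have hGm (z : ℂ) (hz : G z = 0) : VanishesToOrder G z (m (-z)) := by
    obtain ⟨g, hg, hfg⟩ := hm (-z) (by simpa [G] using hz)
    refine ⟨fun w => (-1) ^ m (-z) * g (-w) * cexp (c * I * w), by fun_prop, fun w => ?_⟩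
    simp only [G, hfg, show -w - -z = -1 * (w - z) by ring, mul_pow]
    ring
  obtain ⟨C, hC⟩ := exists_sum_im_div_sq_norm_le (by fun_prop) hGM hGne _ hGm
  refine ⟨C, fun S hS => ?_⟩
  convert hC (S.map (Equiv.neg ℂ).toEmbedding)
    (by simpa [G] using fun z hz => hS (-z) hz) using 1
  simp

theorem exists_sum_abs_im_div_sq_norm_le (hf : Differentiable ℂ f) (hne : ∃ w, f w ≠ 0)
    {M c : ℝ} (hM : ∀ w, ‖f w‖ ≤ M * Real.exp (c * max 0 (-w.im))) (m : ℂ → ℕ)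
    (hm : ∀ z, f z = 0 → VanishesToOrder f z (m z)) :
    ∃ C, ∀ S : Finset ℂ, (∀ z ∈ S, f z = 0) →
      ∑ z ∈ S, (m z : ℝ) * (|z.im| / ‖z‖ ^ 2) ≤ C := by
  set φ : ℂ → ℝ := fun z => (m z : ℝ) * (|z.im| / ‖z‖ ^ 2)
  have hφ (z : ℂ) : 0 ≤ φ z := by positivity
  have hfin := hf.finite_setOf_eq_zero_of_isCompact hne (isCompact_closedBall 0 1)
  obtain ⟨Cupper, hupper⟩ := exists_sum_im_div_sq_norm_le hf
    (fun w hw => by simpa [max_eq_left (neg_nonpos.2 hw)] using hM w) hne m hm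
  obtain ⟨Clower, hlower⟩ := exists_sum_neg_im_div_sq_norm_le hf hne hM m hm
  refine ⟨∑ z ∈ hfin.toFinset, φ z + Cupper + Clower, fun S hS => ?_⟩
  calc ∑ z ∈ S, φ z
      ≤ ∑ z ∈ S.filter (‖·‖ ≤ 1), φ z + ∑ z ∈ S.filter (fun z => 1 ≤ ‖z‖ ∧ 0 < z.im), φ z
        + ∑ z ∈ S.filter (fun z => 1 ≤ ‖z‖ ∧ z.im < 0), φ z := by
        simp only [Finset.sum_filter, ← Finset.sum_add_distrib]
        refine Finset.sum_le_sum fun z _ => ?_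
        split_ifs <;> try linarith [hφ z]
        rename_i hsmall hup hlow
        have hz1 : 1 ≤ ‖z‖ := (lt_of_not_ge hsmall).le
        have him : z.im = 0 := le_antisymm (not_lt.1 fun h => hup ⟨hz1, h⟩)
          (not_lt.1 fun h => hlow ⟨hz1, h⟩)
        simp [φ, him]
    _ ≤ ∑ z ∈ hfin.toFinset, φ z + Cupper + Clower := by
        gcongr
        · intro z hz
          simp only [Finset.mem_filter] at hz
          simpa [hS z hz.1] using hz.2
        · refine le_of_eq_of_le (Finset.sum_congr rfl fun z hz => ?_) (hupper _ fun z hz => ?_)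
          · simp only [Finset.mem_filter] at hz
            simp [φ, abs_of_pos hz.2.2]
          · simp only [Finset.mem_filter] at hz
            exact ⟨hz.2.2, hz.2.1, hS z hz.1⟩
        · refine le_of_eq_of_le (Finset.sum_congr rfl fun z hz => ?_) (hlower _ fun z hz => ?_)
          · simp only [Finset.mem_filter] at hz
            simp [φ, abs_of_neg hz.2.2, neg_div]
          · simp only [Finset.mem_filter] at hz
            exact ⟨hz.2.2, hz.2.1, hS z hz.1⟩

end BlaschkeCondition

theorem summable_of_sum_ncard_mul_le {α : Type*} {Λ : ℕ → α} {φ : α → ℝ} (hφ : ∀ z, 0 ≤ φ z)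
    (hfin : ∀ n, {k | Λ k = Λ n}.Finite) {C : ℝ}
    (hC : ∀ S : Finset α, (∀ z ∈ S, z ∈ range Λ) →
      ∑ z ∈ S, ({n | Λ n = z}.ncard : ℝ) * φ z ≤ C) :
    Summable fun n => φ (Λ n) := by
  classical
  refine summable_of_sum_range_le (c := C) (fun n => hφ _) fun N => ?_
  rw [Finset.sum_comp]
  refine le_trans (Finset.sum_le_sum fun z hz => ?_) (hC _ fun z hz => ?_)
  · obtain ⟨n, -, rfl⟩ := Finset.mem_image.1 hz
    rw [nsmul_eq_mul]
    gcongr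
    · exact hφ _
    · rw [← Set.ncard_coe_finset]
      exact Set.ncard_le_ncard (fun k hk => (Finset.mem_filter.1 hk).2) (hfin n)
  · obtain ⟨n, -, rfl⟩ := Finset.mem_image.1 hz
    exact mem_range_self n

theorem stmt6_general (q : ℝ → ℂ) (γ : ℝ) (hq1 : Integrable q)
    (hA : CondA q γ) (Λ : ℕ → ℂ) (hz : ∀ n, aFun q (Λ n) = 0)
    (hmult : ∀ z : ℂ, aFun q z = 0 → ZeroOrder (aFun q) z ({n : ℕ | Λ n = z}.ncard)) :
    Summable (fun n : ℕ => |(Λ n).im| / ‖Λ n‖ ^ 2) := by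
  obtain ⟨hγ, hhull⟩ := hA
  have hsupp (s : ℝ) (hs : q s ≠ 0) : s ≤ γ :=
    (hhull ▸ subset_convexHull ℝ _ (subset_tsupport q hs) : s ∈ Icc 0 γ).2
  have hΛ0 := hmult _ (hz 0)
  obtain ⟨C, hC⟩ := exists_sum_abs_im_div_sq_norm_le hΛ0.vanishesToOrder.differentiable
    hΛ0.exists_ne_zero (norm_aFun_le hq1 hγ.le hsupp) (fun z => {n | Λ n = z}.ncard)
    fun z hz0 => (hmult z hz0).vanishesToOrder
  -- An infinite fibre would have `ncard = 0`, which `pos_of_eq_zero` rules out.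
  refine summable_of_sum_ncard_mul_le (fun z => by positivity)
    (fun n => Set.finite_of_ncard_pos ((hmult _ (hz n)).pos_of_eq_zero (hz n)))
    fun S hS => hC S fun z hzS => ?_
  obtain ⟨n, rfl⟩ := hS z hzS
  exact hz n

theorem stmt6 (q : ℝ → ℂ) (γ : ℝ) (hq1 : Integrable q) (hq2 : MemLp q 2)
    (hA : CondA q γ) (Λ : ℕ → ℂ) (hz : ∀ n, aFun q (Λ n) = 0)
    (hmult : ∀ z : ℂ, aFun q z = 0 → ZeroOrder (aFun q) z ({n : ℕ | Λ n = z}.ncard)) :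
    Summable (fun n : ℕ => |(Λ n).im| / ‖Λ n‖ ^ 2) :=
  stmt6_general q γ hq1 hA Λ hz hmult
end

section
/- Let γ > 0, let f : ℂ → ℂ be an entire function of exponential type (i.e. there exist constants C, A > 0 with |f(z)| ≤ C·e^{A|z|} for all z ∈ ℂ) such that limsup_{y→+∞} (log |f(−iy)|)/y ≤ 2γ. Let p ≥ 0 be an integer, let G_p(z) = 1 + Σ_{n=1}^p d_n z^{−n} with d_1, …, d_p ∈ ℂ, and assume C_p := sup_{x∈ℝ} |x^{p+1}(f(x) − G_p(x))| < ∞. Then every zero z₀ of f with Im z₀ ≤ 0 and z₀ ≠ 0 satisfies |G_p(z₀)| ≤ C_p · |z₀|^{−(p+1)} · e^{−2γ·Im z₀}. -/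
/-
With `P(z) = z^{p+1} G_p(z)`, a polynomial, the function `h(z) = (z^{p+1} f(z) - P(z)) e^{-2iγz}`
is entire of exponential type. On the real line `|h(x)| = |x^{p+1} (f(x) - G_p(x))| ≤ C_p`, and on
the negative imaginary axis the factor `e^{-2γy}` absorbs the growth of `f`, so that
`|h(-iy)| = e^{o(y)}`. Phragmén–Lindelöf then bounds `|h|` by `C_p` on the closed lower
half-plane, and at a zero `z₀` of `f` this bound reads `|z₀|^{p+1} |G_p(z₀)| e^{2γ Im z₀} ≤ C_p`.
-/

open MeasureTheory Set Filter

open Complex Bornology Asymptotics Topology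

section PhragmenLindelof

variable {E : Type*} [NormedAddCommGroup E] [NormedSpace ℂ E] {h : ℂ → E} {C : ℝ}

theorem PhragmenLindelof.lower_half_plane_of_subexponential_on_imaginary
    (hd : DiffContOnCl ℂ h {z | z.im < 0})
    (hexp : ∃ c < (2 : ℝ), ∃ B,
      h =O[cobounded ℂ ⊓ 𝓟 {z | z.im < 0}] fun z => Real.exp (B * ‖z‖ ^ c))
    (hray : ∀ ε > 0, (fun y : ℝ => h (-I * y)) =O[atTop] fun y => Real.exp (ε * y))
    (hreal : ∀ x : ℝ, ‖h x‖ ≤ C) {z : ℂ} (hz : z.im ≤ 0) : ‖h z‖ ≤ C := by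
  suffices ∀ ε > 0, Real.exp (ε * z.im) * ‖h z‖ ≤ C by
    refine le_of_tendsto (x := 𝓝[>] 0) ?_ (eventually_nhdsWithin_of_forall this)
    exact (Continuous.tendsto' (by fun_prop) _ _ (by simp)).mono_left nhdsWithin_le_nhds
  intro ε hε
  -- rotate onto the right half-plane; `e^{-εw}` damps the `e^{o(y)}` growth along the ray
  set g : ℂ → E := fun w => cexp (-ε * w) • h (-I * w)
  have hgn : ∀ w, ‖g w‖ = Real.exp (-ε * w.re) * ‖h (-I * w)‖ := fun w => by
    simp [g, norm_smul, Complex.norm_exp]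
  have hmaps : MapsTo (-I * ·) {w : ℂ | 0 < w.re} {z | z.im < 0} := fun w hw => by
    simpa using hw
  have hrot : Tendsto (-I * ·) (cobounded ℂ ⊓ 𝓟 {w | 0 < w.re})
      (cobounded ℂ ⊓ 𝓟 {z | z.im < 0}) :=
    (tendsto_mul_left_cobounded (by simp)).inf hmaps.tendsto
  have hg : ‖g (I * z)‖ ≤ C := by
    refine PhragmenLindelof.right_half_plane_of_bounded_on_real ?_ ?_ ?_ (fun y => ?_)
      (by simpa using hz)
    · exact (differentiable_id.const_mul _).cexp.diffContOnCl.smul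
        (hd.comp (differentiable_id.const_mul _).diffContOnCl hmaps)
    · obtain ⟨c, hc, B, hO⟩ := hexp
      refine ⟨c, hc, B, .trans (.of_bound' ?_) (g := fun w => h (-I * w)) ?_⟩
      · refine eventually_inf_principal.2 <| .of_forall fun w hw => ?_
        rw [hgn]
        exact mul_le_of_le_one_left (norm_nonneg _)
          (Real.exp_le_one_iff.2 (by nlinarith [hw.out]))
      · simpa [Function.comp_def] using hO.comp_tendsto hrot
    · rw [← isBigO_one_iff ℝ]
      have : (fun x : ℝ => cexp (-ε * x)) =O[atTop] fun x => Real.exp (-ε * x) :=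
        .of_bound' (.of_forall fun x => by simp [Complex.norm_exp])
      refine (this.smul (hray ε hε)).congr_right fun x => ?_
      rw [smul_eq_mul, ← Real.exp_add]
      simp
    · rw [hgn]
      simpa [mul_comm _ I, ← mul_assoc] using hreal y
  rw [hgn] at hg
  simpa [← mul_assoc] using hg

end PhragmenLindelof

section LimsupGrowth

variable {E : Type*} [SeminormedAddGroup E] {u : ℝ → E} {C A : ℝ}

lemma isBoundedUnder_log_norm_div (hu : ∀ᶠ y in atTop, ‖u y‖ ≤ C * Real.exp (A * y)) :
    IsBoundedUnder (· ≤ ·) atTop fun y => Real.log ‖u y‖ / y := by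
  refine ⟨|Real.log C| + |A|, eventually_map.2 ?_⟩
  filter_upwards [hu, eventually_ge_atTop 1] with y hy hy1
  rw [div_le_iff₀ (by linarith)]
  rcases (norm_nonneg (u y)).eq_or_lt with h0 | h0
  · rw [← h0, Real.log_zero]
    positivity
  have hC : 0 < C := pos_of_mul_pos_left (h0.trans_le hy) (Real.exp_pos _).le
  calc Real.log ‖u y‖ ≤ Real.log (C * Real.exp (A * y)) := Real.log_le_log h0 hy
    _ = Real.log C + A * y := by rw [Real.log_mul hC.ne' (Real.exp_pos _).ne', Real.log_exp]
    _ ≤ (|Real.log C| + |A|) * y := by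
      nlinarith [le_abs_self (Real.log C), le_abs_self A, abs_nonneg (Real.log C)]

lemma isBigO_exp_of_limsup_log_norm_div_le {a ε : ℝ}
    (hu : ∀ᶠ y in atTop, ‖u y‖ ≤ C * Real.exp (A * y))
    (hlim : limsup (fun y => Real.log ‖u y‖ / y) atTop ≤ a) (hε : 0 < ε) :
    u =O[atTop] fun y => Real.exp ((a + ε) * y) := by
  have hlt := eventually_lt_of_limsup_lt (hlim.trans_lt (lt_add_of_pos_right a hε))
    (isBoundedUnder_log_norm_div hu)
  refine .of_bound' ?_
  filter_upwards [hlt, eventually_gt_atTop 0] with y hy hy0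
  rw [Real.norm_of_nonneg (Real.exp_pos _).le]
  rcases (norm_nonneg (u y)).eq_or_lt with h0 | h0
  · rw [← h0]
    positivity
  calc ‖u y‖ = Real.exp (Real.log ‖u y‖) := (Real.exp_log h0).symm
    _ ≤ Real.exp ((a + ε) * y) := Real.exp_le_exp.2 ((div_lt_iff₀ hy0).1 hy).le

end LimsupGrowth

lemma norm_cexp_neg_two_mul_I_mul (γ : ℝ) (z : ℂ) :
    ‖cexp (-(2 * γ * I * z))‖ = Real.exp (2 * γ * z.im) := by
  simp [Complex.norm_exp]

/-- The truncated expansion `G_p(z) = 1 + ∑_{n=1}^p d_n z^{-n}`. -/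
noncomputable def truncExpansion (d : ℕ → ℂ) (p : ℕ) (z : ℂ) : ℂ :=
  1 + ∑ n ∈ Finset.Icc 1 p, d n / z ^ n

/-- The polynomial `z^{p+1} G_p(z)`. -/
def truncExpansionPoly (d : ℕ → ℂ) (p : ℕ) (z : ℂ) : ℂ :=
  z ^ (p + 1) + ∑ n ∈ Finset.Icc 1 p, d n * z ^ (p + 1 - n)

section TruncExpansion

variable (d : ℕ → ℂ) (p : ℕ)

lemma truncExpansionPoly_eq {z : ℂ} (hz : z ≠ 0) :
    truncExpansionPoly d p z = z ^ (p + 1) * truncExpansion d p z := by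
  rw [truncExpansionPoly, truncExpansion, mul_add, mul_one, Finset.mul_sum]
  congr 1
  refine Finset.sum_congr rfl fun n hn => ?_
  rw [pow_sub₀ z hz (by grind)]
  ring

lemma truncExpansionPoly_zero : truncExpansionPoly d p 0 = 0 := by
  simp only [truncExpansionPoly, ne_eq, add_eq_zero, one_ne_zero, and_false,
    not_false_eq_true, zero_pow, zero_add]
  exact Finset.sum_eq_zero fun n hn => by
    rw [zero_pow (by grind), mul_zero]

lemma differentiable_truncExpansionPoly : Differentiable ℂ (truncExpansionPoly d p) := by
  unfold truncExpansionPoly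
  fun_prop

lemma tendsto_truncExpansion_cobounded : Tendsto (truncExpansion d p) (cobounded ℂ) (𝓝 1) := by
  have hsum : Tendsto (fun z => ∑ n ∈ Finset.Icc 1 p, d n * z⁻¹ ^ n) (cobounded ℂ)
      (𝓝 (∑ n ∈ Finset.Icc 1 p, d n * 0 ^ n)) :=
    tendsto_finsetSum _ fun n _ => (tendsto_inv₀_cobounded.pow n).const_mul (d n)
  rw [Finset.sum_eq_zero fun n hn => by rw [zero_pow (by grind), mul_zero]] at hsum
  rw [← add_zero 1]
  exact (hsum.const_add 1).congr fun z => by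
    simp only [truncExpansion, div_eq_mul_inv, inv_pow]

end TruncExpansion

/-- `h(z) = z^{p+1} (f(z) - G_p(z)) e^{-2iγz}`, written so as to be entire. -/
noncomputable def weightedRemainder (f : ℂ → ℂ) (γ : ℝ) (d : ℕ → ℂ) (p : ℕ) (z : ℂ) : ℂ :=
  (z ^ (p + 1) * f z - truncExpansionPoly d p z) * cexp (-(2 * γ * I * z))

section WeightedRemainder

variable {f : ℂ → ℂ} {γ : ℝ} {d : ℕ → ℂ} {p : ℕ}

lemma weightedRemainder_eq {z : ℂ} (hz : z ≠ 0) :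
    weightedRemainder f γ d p z =
      z ^ (p + 1) * (f z - truncExpansion d p z) * cexp (-(2 * γ * I * z)) := by
  rw [weightedRemainder, truncExpansionPoly_eq d p hz, mul_sub]

lemma differentiable_weightedRemainder (hf : Differentiable ℂ f) :
    Differentiable ℂ (weightedRemainder f γ d p) := by
  have := differentiable_truncExpansionPoly d p
  unfold weightedRemainder
  fun_prop

lemma norm_weightedRemainder_ofReal_le {Cp : ℝ}
    (hCp : ∀ x : ℝ, ‖(x : ℂ) ^ (p + 1) * (f x - truncExpansion d p x)‖ ≤ Cp) (x : ℝ) :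
    ‖weightedRemainder f γ d p x‖ ≤ Cp := by
  rcases eq_or_ne x 0 with rfl | hx
  · simpa [weightedRemainder, truncExpansionPoly_zero] using hCp 0
  rw [weightedRemainder_eq (ofReal_ne_zero.2 hx), norm_mul, norm_cexp_neg_two_mul_I_mul]
  simpa using hCp x

lemma norm_weightedRemainder_of_eq_zero {z : ℂ} (hz : z ≠ 0) (hfz : f z = 0) :
    ‖weightedRemainder f γ d p z‖ =
      ‖z‖ ^ (p + 1) * ‖truncExpansion d p z‖ * Real.exp (2 * γ * z.im) := by
  rw [weightedRemainder_eq hz, hfz, zero_sub, norm_mul, norm_cexp_neg_two_mul_I_mul, norm_mul,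
    norm_neg, norm_pow]

lemma weightedRemainder_isBigO_cobounded {C A : ℝ}
    (hgrowth : ∀ z, ‖f z‖ ≤ C * Real.exp (A * ‖z‖)) (hA : 0 ≤ A) (hγ : 0 ≤ γ) :
    weightedRemainder f γ d p =O[cobounded ℂ] fun z => Real.exp ((1 + A + 2 * γ) * ‖z‖) := by
  have hpow : (fun z : ℂ => z ^ (p + 1)) =O[cobounded ℂ] fun z => Real.exp (1 * ‖z‖) := by
    refine isBigO_norm_left.1 ?_
    simpa only [norm_pow, Function.comp_def] using
      (isLittleO_pow_exp_pos_mul_atTop (p + 1) one_pos).isBigO.comp_tendsto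
        tendsto_norm_cobounded_atTop
  have hf : f =O[cobounded ℂ] fun z => Real.exp (A * ‖z‖) :=
    .of_bound |C| (.of_forall fun z => by
      simpa [abs_mul] using (hgrowth z).trans (le_abs_self _))
  have hone : (fun _ : ℂ => (1 : ℝ)) =O[cobounded ℂ] fun z => Real.exp (A * ‖z‖) :=
    .of_bound' (.of_forall fun z => by simpa using Real.one_le_exp (by positivity))
  have hG := ((tendsto_truncExpansion_cobounded d p).isBigO_one ℝ).trans hone
  have hexp : (fun z => cexp (-(2 * γ * I * z))) =O[cobounded ℂ]
      fun z => Real.exp (2 * γ * ‖z‖) :=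
    .of_bound' (.of_forall fun z => by
      rw [norm_cexp_neg_two_mul_I_mul, Real.norm_of_nonneg (Real.exp_pos _).le]
      exact Real.exp_le_exp.2 (by nlinarith [z.im_le_norm]))
  refine ((hpow.mul (hf.sub hG)).mul hexp).congr' ?_ (.of_forall fun z => ?_)
  · filter_upwards [eventually_ne_cobounded 0] with z hz
    rw [weightedRemainder_eq hz]
  · simp only [← Real.exp_add]
    ring_nf

lemma weightedRemainder_isBigO_neg_imaginary {C A ε : ℝ}
    (hgrowth : ∀ z, ‖f z‖ ≤ C * Real.exp (A * ‖z‖))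
    (htype : limsup (fun y : ℝ => Real.log ‖f (-I * y)‖ / y) atTop ≤ 2 * γ) (hγ : 0 ≤ γ)
    (hε : 0 < ε) :
    (fun y : ℝ => weightedRemainder f γ d p (-I * y)) =O[atTop] fun y => Real.exp (ε * y) := by
  have hray : Tendsto (fun y : ℝ => -I * y) atTop (cobounded ℂ) :=
    (tendsto_mul_left_cobounded (by simp)).comp (RCLike.tendsto_ofReal_atTop_cobounded ℂ)
  have hpow : (fun y : ℝ => (-I * y) ^ (p + 1)) =O[atTop] fun y => Real.exp (ε / 2 * y) := by
    refine isBigO_norm_left.1 ?_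
    simpa [norm_pow] using
      (isLittleO_pow_exp_pos_mul_atTop (p + 1) (half_pos hε)).isBigO.norm_left
  have hf : (fun y : ℝ => f (-I * y)) =O[atTop] fun y => Real.exp ((2 * γ + ε / 2) * y) := by
    refine isBigO_exp_of_limsup_log_norm_div_le (C := C) (A := A) ?_ htype (half_pos hε)
    filter_upwards [eventually_ge_atTop 0] with y hy
    simpa [abs_of_nonneg hy] using hgrowth (-I * y)
  have hone : (fun _ : ℝ => (1 : ℝ)) =O[atTop] fun y => Real.exp ((2 * γ + ε / 2) * y) :=
    .of_bound' (by
      filter_upwards [eventually_ge_atTop 0] with y hy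
      simpa using Real.one_le_exp (by positivity))
  have hG := (((tendsto_truncExpansion_cobounded d p).comp hray).isBigO_one ℝ).trans hone
  have hexp : (fun y : ℝ => cexp (-(2 * γ * I * (-I * y)))) =O[atTop]
      fun y => Real.exp (-(2 * γ) * y) :=
    .of_bound' (.of_forall fun y => by
      rw [norm_cexp_neg_two_mul_I_mul, Real.norm_of_nonneg (Real.exp_pos _).le]
      simp)
  refine ((hpow.mul (hf.sub hG)).mul hexp).congr' ?_ (.of_forall fun y => ?_)
  · filter_upwards [eventually_gt_atTop 0] with y hy
    rw [weightedRemainder_eq (by simpa using hy.ne')]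
    rfl
  · simp only [← Real.exp_add]
    ring_nf

end WeightedRemainder

theorem stmt9_general (γ : ℝ) (hγ : 0 < γ) (f : ℂ → ℂ) (hf : Differentiable ℂ f)
    (C A : ℝ) (hA : 0 < A)
    (hgrowth : ∀ z : ℂ, ‖f z‖ ≤ C * Real.exp (A * ‖z‖))
    (htype : limsup (fun y : ℝ => Real.log ‖f (-Complex.I * (y : ℂ))‖ / y) atTop ≤ 2 * γ)
    (p : ℕ) (d : ℕ → ℂ) (Cp : ℝ)
    (hCp : ∀ x : ℝ,
      ‖(x : ℂ) ^ (p + 1) *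
        (f x - (1 + ∑ n ∈ Finset.Icc 1 p, d n / (x : ℂ) ^ n))‖ ≤ Cp) :
    ∀ z₀ : ℂ, f z₀ = 0 → z₀.im ≤ 0 → z₀ ≠ 0 →
      ‖1 + ∑ n ∈ Finset.Icc 1 p, d n / z₀ ^ n‖ ≤
        Cp / ‖z₀‖ ^ (p + 1) * Real.exp (-2 * γ * z₀.im) := by
  intro z₀ hfz₀ him hz₀
  have hbound : ‖weightedRemainder f γ d p z₀‖ ≤ Cp :=
    PhragmenLindelof.lower_half_plane_of_subexponential_on_imaginary
      (differentiable_weightedRemainder hf).diffContOnCl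
      ⟨1, one_lt_two, _, by
        simpa using (weightedRemainder_isBigO_cobounded hgrowth hA.le hγ.le).mono inf_le_left⟩
      (fun ε hε => weightedRemainder_isBigO_neg_imaginary hgrowth htype hγ.le hε)
      (norm_weightedRemainder_ofReal_le hCp) him
  rw [norm_weightedRemainder_of_eq_zero hz₀ hfz₀] at hbound
  change ‖truncExpansion d p z₀‖ ≤ _
  rw [div_mul_eq_mul_div, le_div_iff₀ (by positivity), neg_mul, neg_mul, Real.exp_neg,
    ← div_eq_mul_inv, le_div_iff₀ (Real.exp_pos _)]
  linarith

theorem stmt9 (γ : ℝ) (hγ : 0 < γ) (f : ℂ → ℂ) (hf : Differentiable ℂ f)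
    (C A : ℝ) (hC : 0 < C) (hA : 0 < A)
    (hgrowth : ∀ z : ℂ, ‖f z‖ ≤ C * Real.exp (A * ‖z‖))
    (htype : limsup (fun y : ℝ => Real.log ‖f (-Complex.I * (y : ℂ))‖ / y) atTop ≤ 2 * γ)
    (p : ℕ) (d : ℕ → ℂ) (Cp : ℝ)
    (hCp : ∀ x : ℝ,
      ‖(x : ℂ) ^ (p + 1) *
        (f x - (1 + ∑ n ∈ Finset.Icc 1 p, d n / (x : ℂ) ^ n))‖ ≤ Cp) :
    ∀ z₀ : ℂ, f z₀ = 0 → z₀.im ≤ 0 → z₀ ≠ 0 →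
      ‖1 + ∑ n ∈ Finset.Icc 1 p, d n / z₀ ^ n‖ ≤
        Cp / ‖z₀‖ ^ (p + 1) * Real.exp (-2 * γ * z₀.im) :=
  stmt9_general γ hγ f hf C A hA hgrowth htype p d Cp hCp
end

section
/- Let γ > 0 and let f : ℂ → ℂ be an entire function of exponential type (|f(z)| ≤ C·e^{A|z|} for some constants C, A > 0) with limsup_{y→+∞} (log |f(−iy)|)/y ≤ 2γ. Assume C₀ := sup_{x∈ℝ} |x·(f(x) − 1)| < ∞. Then every zero z₀ of f with Im z₀ ≤ 0 satisfies |z₀| ≤ C₀ · e^{−2γ·Im z₀}. -/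
/-!
For `a > 2γ` put `g z = z (f z - 1)` and `F w = exp (-a w) g (-i w)`. Then `F` has exponential
type in the right half-plane, is bounded by `C₀` on the imaginary axis (where `-i w` is real), and
tends to `0` along the positive real axis, because the type hypothesis gives `f (-i y) = O(e^{b y})`
for any `b ∈ (2γ, a)`. By Phragmén–Lindelöf `‖F‖ ≤ C₀` on the closed right half-plane; at
`w = i z₀` this reads `e^{a Im z₀} ‖z₀‖ ≤ C₀`, and letting `a ↓ 2γ` gives the bound.
-/

open MeasureTheory Set Filter

open Topology Asymptotics Bornology
open Complex (I)

theorem PhragmenLindelof.norm_le_mul_exp_neg_im_of_lower_half_plane {g : ℂ → ℂ}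
    (hg : Differentiable ℂ g) {A a M : ℝ} (hgrowth : g =O[⊤] fun z => Real.exp (A * ‖z‖))
    (hreal : ∀ x : ℝ, ‖g x‖ ≤ M)
    (hdecay : (fun y : ℝ => g (-I * y)) =o[atTop] fun y => Real.exp (a * y))
    {z : ℂ} (hz : z.im ≤ 0) : ‖g z‖ ≤ M * Real.exp (-a * z.im) := by
  set F : ℂ → ℂ := fun w => Complex.exp (-a * w) * g (-I * w)
  have hnormF : ∀ w, ‖F w‖ = Real.exp (-a * w.re) * ‖g (-I * w)‖ := fun w => by
    simp [F, Complex.norm_exp]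
  have hexp : ∃ c < (2 : ℝ), ∃ B,
      F =O[cobounded ℂ ⊓ 𝓟 {w | 0 < w.re}] fun w => Real.exp (B * ‖w‖ ^ c) := by
    refine ⟨1, one_lt_two, |a| + A, ?_⟩
    have hweight : (fun w : ℂ => Complex.exp (-a * w)) =O[⊤] fun w => Real.exp (|a| * ‖w‖) :=
      IsBigO.of_bound 1 <| Eventually.of_forall fun w => by
        have hre_le : -(a * w.re) ≤ |a| * ‖w‖ := (neg_le_abs _).trans <| by
          rw [abs_mul]
          exact mul_le_mul_of_nonneg_left (Complex.abs_re_le_norm w) (abs_nonneg a)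
        simpa [Complex.norm_exp] using hre_le
    have hrot : (fun w => g (-I * w)) =O[⊤] fun w => Real.exp (A * ‖w‖) :=
      (hgrowth.comp_tendsto tendsto_top).congr_right fun w => by simp
    refine ((hweight.mul hrot).mono le_top).congr_right fun w => ?_
    rw [Real.rpow_one, ← Real.exp_add, add_mul]
  have hre : Tendsto (fun x : ℝ => F x) atTop (𝓝 0) := by
    rw [tendsto_zero_iff_norm_tendsto_zero]
    refine hdecay.norm_left.tendsto_div_nhds_zero.congr fun x => ?_
    rw [hnormF, Complex.ofReal_re, div_eq_inv_mul, ← Real.exp_neg]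
    ring_nf
  have him : ∀ x : ℝ, ‖F (x * I)‖ ≤ M := fun x => by
    have hx : -I * (x * I) = x := by ring_nf; simp
    simpa [hnormF, hx] using hreal x
  have hF := PhragmenLindelof.right_half_plane_of_tendsto_zero_on_real
    (by fun_prop : Differentiable ℂ F).diffContOnCl hexp hre him (z := I * z) (by simpa using hz)
  have hz' : -I * (I * z) = z := by ring_nf; simp
  rw [hnormF, hz'] at hF
  have hre_Iz : (I * z).re = -z.im := by simp
  rw [hre_Iz, mul_comm, ← le_div_iff₀ (Real.exp_pos _), div_eq_mul_inv, ← Real.exp_neg] at hF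
  rwa [show -(-a * -z.im) = -a * z.im by ring] at hF

theorem isBoundedUnder_log_norm_div_atTop {E : Type*} [NormedAddCommGroup E] {u : ℝ → E}
    {C A : ℝ} (h : ∀ᶠ y in atTop, ‖u y‖ ≤ C * Real.exp (A * y)) :
    IsBoundedUnder (· ≤ ·) atTop fun y => Real.log ‖u y‖ / y := by
  refine ⟨|Real.log C| + |A|, eventually_map.2 ?_⟩
  filter_upwards [h, eventually_ge_atTop 1] with y hy hy1
  have hpos : (0 : ℝ) < y := one_pos.trans_le hy1
  rw [div_le_iff₀ hpos]
  rcases (norm_nonneg (u y)).eq_or_lt with h0 | h0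
  · rw [← h0, Real.log_zero]
    positivity
  have hC : C ≠ 0 := left_ne_zero_of_mul (h0.trans_le hy).ne'
  calc Real.log ‖u y‖ ≤ Real.log C + A * y := by
        simpa [Real.log_mul hC (Real.exp_ne_zero _)] using Real.log_le_log h0 hy
    _ ≤ |Real.log C| * y + |A| * y := by
        gcongr
        · exact (le_abs_self _).trans (le_mul_of_one_le_right (abs_nonneg _) hy1)
        · exact le_abs_self A
    _ = (|Real.log C| + |A|) * y := by ring

theorem isBigO_exp_of_limsup_log_norm_div_lt {E : Type*} [NormedAddCommGroup E] {u : ℝ → E}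
    {b : ℝ} (hbdd : IsBoundedUnder (· ≤ ·) atTop fun y => Real.log ‖u y‖ / y)
    (hlim : limsup (fun y => Real.log ‖u y‖ / y) atTop < b) :
    u =O[atTop] fun y => Real.exp (b * y) := by
  refine IsBigO.of_bound 1 ?_
  filter_upwards [eventually_lt_of_limsup_lt hlim hbdd, eventually_gt_atTop 0] with y hlt hy
  rw [one_mul, Real.norm_of_nonneg (Real.exp_pos _).le]
  rcases (norm_nonneg (u y)).eq_or_lt with h0 | h0
  · rw [← h0]
    positivity
  rw [← Real.exp_log h0]
  exact Real.exp_le_exp.2 ((div_lt_iff₀ hy).1 hlt).le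

theorem isBigO_mul_sub_one_of_norm_le_exp {f : ℂ → ℂ} {C A : ℝ} (hA : 0 ≤ A)
    (h : ∀ z, ‖f z‖ ≤ C * Real.exp (A * ‖z‖)) :
    (fun z => z * (f z - 1)) =O[⊤] fun z => Real.exp ((1 + A) * ‖z‖) := by
  have hid : (fun z : ℂ => z) =O[⊤] fun z => Real.exp (1 * ‖z‖) :=
    IsBigO.of_bound 1 <| Eventually.of_forall fun z => by
      simpa using (Real.add_one_le_exp ‖z‖).trans' (le_add_of_nonneg_right zero_le_one)
  have hf : f =O[⊤] fun z => Real.exp (A * ‖z‖) :=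
    IsBigO.of_bound C <| Eventually.of_forall fun z => by simpa using h z
  have hone : (fun _ : ℂ => (1 : ℂ)) =O[⊤] fun z => Real.exp (A * ‖z‖) :=
    IsBigO.of_bound 1 <| Eventually.of_forall fun z => by
      simpa using Real.one_le_exp (by positivity : 0 ≤ A * ‖z‖)
  refine (hid.mul (hf.sub hone)).congr_right fun z => ?_
  rw [← Real.exp_add, add_mul]

theorem isLittleO_mul_sub_one_of_isBigO_exp {u : ℝ → ℂ} {a b : ℝ} (hb : 0 ≤ b) (hab : b < a)
    (hu : u =O[atTop] fun y => Real.exp (b * y)) :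
    (fun y : ℝ => (y : ℂ) * (u y - 1)) =o[atTop] fun y => Real.exp (a * y) := by
  have hid : (fun y : ℝ => (y : ℂ)) =o[atTop] fun y => Real.exp ((a - b) * y) := by
    refine IsLittleO.of_norm_left ?_
    simpa using (isLittleO_pow_exp_pos_mul_atTop 1 (sub_pos.2 hab)).norm_left
  have hone : (fun _ : ℝ => (1 : ℂ)) =O[atTop] fun y => Real.exp (b * y) :=
    IsBigO.of_bound 1 <| (eventually_ge_atTop 0).mono fun y hy => by
      simpa using Real.one_le_exp (mul_nonneg hb hy)
  refine (hid.mul_isBigO (hu.sub hone)).congr_right fun y => ?_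
  rw [← Real.exp_add, ← add_mul, sub_add_cancel]

theorem stmt10_general (γ : ℝ) (hγ : 0 < γ) (f : ℂ → ℂ) (hf : Differentiable ℂ f)
    (C A : ℝ) (hA : 0 < A)
    (hgrowth : ∀ z : ℂ, ‖f z‖ ≤ C * Real.exp (A * ‖z‖))
    (htype : limsup (fun y : ℝ => Real.log ‖f (-Complex.I * (y : ℂ))‖ / y) atTop ≤ 2 * γ)
    (C₀ : ℝ) (hC₀ : ∀ x : ℝ, ‖(x : ℂ) * (f x - 1)‖ ≤ C₀) :
    ∀ z₀ : ℂ, f z₀ = 0 → z₀.im ≤ 0 → ‖z₀‖ ≤ C₀ * Real.exp (-2 * γ * z₀.im) := by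
  intro z₀ hz₀ himz
  have hbdd : IsBoundedUnder (· ≤ ·) atTop fun y : ℝ => Real.log ‖f (-I * y)‖ / y :=
    isBoundedUnder_log_norm_div_atTop <| (eventually_ge_atTop 0).mono fun y hy => by
      simpa [abs_of_nonneg hy] using hgrowth (-I * y)
  have hbound : ∀ a > 2 * γ, ‖z₀‖ ≤ C₀ * Real.exp (-a * z₀.im) := by
    intro a ha
    have hf_exp : (fun y : ℝ => f (-I * y)) =O[atTop] fun y => Real.exp ((2 * γ + a) / 2 * y) :=
      isBigO_exp_of_limsup_log_norm_div_lt hbdd (by linarith)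
    have hdecay := (isLittleO_mul_sub_one_of_isBigO_exp (a := a) (by linarith) (by linarith)
      hf_exp).const_mul_left (-I)
    simpa [hz₀] using PhragmenLindelof.norm_le_mul_exp_neg_im_of_lower_half_plane
      (g := fun z => z * (f z - 1)) (by fun_prop)
      (isBigO_mul_sub_one_of_norm_le_exp hA.le hgrowth) hC₀
      (by simpa only [mul_assoc] using hdecay) himz
  have hcont : ContinuousWithinAt (fun a => C₀ * Real.exp (-a * z₀.im)) (Ioi (2 * γ)) (2 * γ) :=
    by fun_prop
  simpa using ge_of_tendsto hcont (eventually_nhdsWithin_of_forall hbound)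

theorem stmt10 (γ : ℝ) (hγ : 0 < γ) (f : ℂ → ℂ) (hf : Differentiable ℂ f)
    (C A : ℝ) (hC : 0 < C) (hA : 0 < A)
    (hgrowth : ∀ z : ℂ, ‖f z‖ ≤ C * Real.exp (A * ‖z‖))
    (htype : limsup (fun y : ℝ => Real.log ‖f (-Complex.I * (y : ℂ))‖ / y) atTop ≤ 2 * γ)
    (C₀ : ℝ) (hC₀ : ∀ x : ℝ, ‖(x : ℂ) * (f x - 1)‖ ≤ C₀) :
    ∀ z₀ : ℂ, f z₀ = 0 → z₀.im ≤ 0 → ‖z₀‖ ≤ C₀ * Real.exp (-2 * γ * z₀.im) :=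
  stmt10_general γ hγ f hf C A hA hgrowth htype C₀ hC₀
end

section
/- Let γ > 0 and let f : ℂ → ℂ be an entire function of exponential type (|f(z)| ≤ C·e^{A'|z|} for some constants C, A' > 0) with limsup_{y→+∞} (log |f(−iy)|)/y ≤ 2γ. Assume that for some A ∈ ℂ one has C₁ := sup_{x∈ℝ} |x²·f(x) − x² − A·x| < ∞. Then every zero z₀ of f with Im z₀ ≤ 0 satisfies |z₀·(z₀ + A)| ≤ C₁ · e^{−2γ·Im z₀}. -/
open MeasureTheory Set Filter

/-! The function `G z = z ^ 2 * f z - z ^ 2 - A * z` is entire of exponential type and bounded by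
`C₁` on the real line. Along the negative imaginary axis `|f (-I y)| ≤ exp (a y)` eventually for
every `a > 2γ`, so `G (-I y) * exp (-c y) → 0` for every `c > 2γ`, the polynomial factors being
absorbed by the gap `c - a`. Phragmén–Lindelöf for `G (-I w) * exp (-c w)` on the right half-plane
gives `|G z| ≤ C₁ exp (-c Im z)` in the lower half-plane; letting `c ↓ 2γ` and evaluating at a zero
`z₀` of `f`, where `G z₀ = -z₀ (z₀ + A)`, gives the claim. -/

open Complex (I)
open Topology Asymptotics

theorem norm_le_mul_exp_lower_half_plane_of_tendsto {g : ℂ → ℂ} {K B M c : ℝ}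
    (hg : Differentiable ℂ g) (hgrowth : ∀ z, ‖g z‖ ≤ K * Real.exp (B * ‖z‖))
    (hreal : ∀ x : ℝ, ‖g x‖ ≤ M)
    (haxis : Tendsto (fun y : ℝ => ‖g (-I * y)‖ * Real.exp (-c * y)) atTop (𝓝 0))
    {z : ℂ} (hz : z.im ≤ 0) : ‖g z‖ ≤ M * Real.exp (-c * z.im) := by
  -- `w ↦ -I * w` maps the right half-plane onto the lower one, where `‖exp (-c * w)‖` becomes
  -- `exp (c * z.im)`.
  set h : ℂ → ℂ := fun w => g (-I * w) * Complex.exp (-c * w)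
  have hnorm (w : ℂ) : ‖h w‖ = ‖g (-I * w)‖ * Real.exp (-c * w.re) := by
    simp [h, Complex.norm_exp]
  have hgrowth_h (w : ℂ) : ‖h w‖ ≤ K * Real.exp ((B + |c|) * ‖w‖) := by
    have hre : -c * w.re ≤ |c| * ‖w‖ := by
      calc -c * w.re ≤ |-c * w.re| := le_abs_self _
        _ ≤ |c| * ‖w‖ := by rw [abs_mul, abs_neg]; gcongr; exact Complex.abs_re_le_norm w
    have hgw : ‖g (-I * w)‖ ≤ K * Real.exp (B * ‖w‖) := by simpa using hgrowth (-I * w)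
    rw [hnorm, add_mul, Real.exp_add, ← mul_assoc]
    exact mul_le_mul hgw (Real.exp_le_exp.2 hre) (Real.exp_pos _).le ((norm_nonneg _).trans hgw)
  have hbound : ‖h (I * z)‖ ≤ M := by
    refine PhragmenLindelof.right_half_plane_of_tendsto_zero_on_real
      (Differentiable.diffContOnCl (by fun_prop)) ⟨1, one_lt_two, B + |c|, ?_⟩ ?_ ?_
      (by simpa using hz)
    · refine IsBigO.of_bound K (Eventually.of_forall fun w => ?_)
      simpa [Real.rpow_one, abs_of_pos (Real.exp_pos _)] using hgrowth_h w
    · refine tendsto_zero_iff_norm_tendsto_zero.2 (haxis.congr fun y => ?_)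
      simp [hnorm]
    · intro x
      have hx : -I * (x * I) = x := by ring_nf; simp
      simpa [hnorm, hx] using hreal x
  have hz' : -I * (I * z) = z := by ring_nf; simp
  rw [hnorm, hz', Complex.mul_re, Complex.I_re, Complex.I_im] at hbound
  rw [← div_le_iff₀ (Real.exp_pos _), div_eq_mul_inv, ← Real.exp_neg]
  simpa using hbound

theorem norm_le_mul_exp_lower_half_plane {g : ℂ → ℂ} {K B M c₀ : ℝ}
    (hg : Differentiable ℂ g) (hgrowth : ∀ z, ‖g z‖ ≤ K * Real.exp (B * ‖z‖))
    (hreal : ∀ x : ℝ, ‖g x‖ ≤ M)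
    (haxis : ∀ c > c₀, Tendsto (fun y : ℝ => ‖g (-I * y)‖ * Real.exp (-c * y)) atTop (𝓝 0))
    {z : ℂ} (hz : z.im ≤ 0) : ‖g z‖ ≤ M * Real.exp (-c₀ * z.im) := by
  have hcont : Continuous fun c : ℝ => M * Real.exp (-c * z.im) := by fun_prop
  refine ge_of_tendsto (x := 𝓝[>] c₀) ((hcont.tendsto c₀).mono_left nhdsWithin_le_nhds) ?_
  filter_upwards [self_mem_nhdsWithin (s := Ioi c₀)] with c hc
  exact norm_le_mul_exp_lower_half_plane_of_tendsto hg hgrowth hreal (haxis c hc) hz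

theorem log_div_le_of_le_mul_exp {r K B x : ℝ} (hr : 0 ≤ r) (hx : 1 ≤ x)
    (h : r ≤ K * Real.exp (B * x)) : Real.log r / x ≤ |Real.log K| + |B| := by
  rw [div_le_iff₀ (by linarith)]
  rcases hr.eq_or_lt with rfl | hr
  · rw [Real.log_zero]
    positivity
  have hK : 0 < K := (mul_pos_iff_of_pos_right (Real.exp_pos _)).1 (hr.trans_le h)
  calc Real.log r ≤ Real.log (K * Real.exp (B * x)) := Real.log_le_log hr h
    _ = Real.log K + B * x := by rw [Real.log_mul hK.ne' (Real.exp_pos _).ne', Real.log_exp]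
    _ ≤ (|Real.log K| + |B|) * x := by
        nlinarith [le_abs_self (Real.log K), le_abs_self B, abs_nonneg (Real.log K)]

theorem eventually_norm_le_exp_of_limsup_le {E : Type*} [NormedAddCommGroup E] {φ : ℝ → E}
    {K B a b : ℝ} (hφ : ∀ᶠ y in atTop, ‖φ y‖ ≤ K * Real.exp (B * y))
    (hlim : limsup (fun y => Real.log ‖φ y‖ / y) atTop ≤ a) (hab : a < b) :
    ∀ᶠ y in atTop, ‖φ y‖ ≤ Real.exp (b * y) := by
  have hbdd : IsBoundedUnder (· ≤ ·) atTop fun y => Real.log ‖φ y‖ / y :=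
    ⟨|Real.log K| + |B|, eventually_map.2 <| by
      filter_upwards [hφ, eventually_ge_atTop 1] with y hy h1
      exact log_div_le_of_le_mul_exp (norm_nonneg _) h1 hy⟩
  filter_upwards [eventually_lt_of_limsup_lt (hlim.trans_lt hab) hbdd, eventually_gt_atTop 0]
    with y hy hy0
  rcases (norm_nonneg (φ y)).eq_or_lt with h0 | h0
  · rw [← h0]
    positivity
  · exact (Real.log_le_iff_le_exp h0).1 ((div_lt_iff₀ hy0).1 hy).le

theorem tendsto_pow_mul_exp_neg_mul_atTop_nhds_zero (n : ℕ) {b : ℝ} (hb : 0 < b) :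
    Tendsto (fun x : ℝ => x ^ n * Real.exp (-b * x)) atTop (𝓝 0) := by
  simpa only [Real.rpow_natCast] using tendsto_rpow_mul_exp_neg_mul_atTop_nhds_zero n b hb

theorem norm_sq_mul_sub_le (w A z : ℂ) :
    ‖z ^ 2 * w - z ^ 2 - A * z‖ ≤ ‖z‖ ^ 2 * ‖w‖ + ‖z‖ ^ 2 + ‖A‖ * ‖z‖ :=
  calc _ ≤ ‖z ^ 2 * w‖ + ‖z ^ 2‖ + ‖A * z‖ := norm_sub_le_of_le (norm_sub_le _ _) le_rfl
    _ = _ := by simp only [norm_mul, norm_pow]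

theorem norm_sq_mul_sub_le_exp {f : ℂ → ℂ} {C A' : ℝ} (hA' : 0 ≤ A')
    (hgrowth : ∀ z, ‖f z‖ ≤ C * Real.exp (A' * ‖z‖)) (A z : ℂ) :
    ‖z ^ 2 * f z - z ^ 2 - A * z‖ ≤ (2 * C + 2 + ‖A‖) * Real.exp ((A' + 1) * ‖z‖) := by
  set r := ‖z‖
  have hr : 0 ≤ r := norm_nonneg z
  have hsq : r ^ 2 ≤ 2 * Real.exp r := by
    have : r ^ 2 / 2 ≤ Real.exp r := by simpa using Real.pow_div_factorial_le_exp r hr 2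
    linarith
  have hlin : r ≤ Real.exp r := by linarith [Real.add_one_le_exp r]
  have hmono : Real.exp r ≤ Real.exp ((A' + 1) * r) := Real.exp_le_exp.2 (by nlinarith)
  have hmul : Real.exp r * Real.exp (A' * r) = Real.exp ((A' + 1) * r) := by
    rw [← Real.exp_add]; ring_nf
  calc _ ≤ r ^ 2 * ‖f z‖ + r ^ 2 + ‖A‖ * r := norm_sq_mul_sub_le _ _ _
    _ ≤ 2 * Real.exp r * (C * Real.exp (A' * r)) + 2 * Real.exp r + ‖A‖ * Real.exp r := by
        gcongr
        exact hgrowth z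
    _ = 2 * C * Real.exp ((A' + 1) * r) + (2 + ‖A‖) * Real.exp r := by rw [← hmul]; ring
    _ ≤ 2 * C * Real.exp ((A' + 1) * r) + (2 + ‖A‖) * Real.exp ((A' + 1) * r) := by gcongr
    _ = _ := by ring

theorem tendsto_norm_sq_mul_sub_mul_exp_neg {f : ℂ → ℂ} {a c : ℝ} (ha : 0 ≤ a) (hac : a < c)
    (hf : ∀ᶠ y : ℝ in atTop, ‖f (-I * y)‖ ≤ Real.exp (a * y)) (A : ℂ) :
    Tendsto (fun y : ℝ =>
      ‖(-I * y) ^ 2 * f (-I * y) - (-I * y) ^ 2 - A * (-I * y)‖ * Real.exp (-c * y))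
      atTop (𝓝 0) := by
  have hlim : Tendsto (fun y : ℝ => 2 * (y ^ 2 * Real.exp (-(c - a) * y))
      + ‖A‖ * (y ^ 1 * Real.exp (-(c - a) * y))) atTop (𝓝 0) := by
    have hb : 0 < c - a := sub_pos.2 hac
    simpa using ((tendsto_pow_mul_exp_neg_mul_atTop_nhds_zero 2 hb).const_mul 2).add
      ((tendsto_pow_mul_exp_neg_mul_atTop_nhds_zero 1 hb).const_mul ‖A‖)
  refine squeeze_zero' (Eventually.of_forall fun y => by positivity) ?_ hlim
  filter_upwards [hf, eventually_ge_atTop 0] with y hfy hy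
  have hnorm : ‖-I * (y : ℂ)‖ = y := by simp [abs_of_nonneg hy]
  have hone : 1 ≤ Real.exp (a * y) := Real.one_le_exp (by positivity)
  have hexp : Real.exp (a * y) * Real.exp (-c * y) = Real.exp (-(c - a) * y) := by
    rw [← Real.exp_add]; ring_nf
  have hG : ‖(-I * y) ^ 2 * f (-I * y) - (-I * y) ^ 2 - A * (-I * y)‖
      ≤ (2 * y ^ 2 + ‖A‖ * y) * Real.exp (a * y) := by
    refine (norm_sq_mul_sub_le _ _ _).trans ?_
    rw [hnorm]
    have h1 : y ^ 2 ≤ y ^ 2 * Real.exp (a * y) := le_mul_of_one_le_right (by positivity) hone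
    have h2 : ‖A‖ * y ≤ ‖A‖ * y * Real.exp (a * y) := le_mul_of_one_le_right (by positivity) hone
    have h3 : y ^ 2 * ‖f (-I * y)‖ ≤ y ^ 2 * Real.exp (a * y) := by gcongr
    linarith
  calc _ ≤ (2 * y ^ 2 + ‖A‖ * y) * Real.exp (a * y) * Real.exp (-c * y) := by gcongr
    _ = _ := by rw [mul_assoc, hexp]; ring

theorem stmt11_general (γ : ℝ) (hγ : 0 < γ) (f : ℂ → ℂ) (hf : Differentiable ℂ f)
    (C A' : ℝ) (hA' : 0 < A')
    (hgrowth : ∀ z : ℂ, ‖f z‖ ≤ C * Real.exp (A' * ‖z‖))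
    (htype : limsup (fun y : ℝ => Real.log ‖f (-Complex.I * (y : ℂ))‖ / y) atTop ≤ 2 * γ)
    (A : ℂ) (C₁ : ℝ)
    (hC₁ : ∀ x : ℝ, ‖(x : ℂ) ^ 2 * f x - (x : ℂ) ^ 2 - A * (x : ℂ)‖ ≤ C₁) :
    ∀ z₀ : ℂ, f z₀ = 0 → z₀.im ≤ 0 →
      ‖z₀ * (z₀ + A)‖ ≤ C₁ * Real.exp (-2 * γ * z₀.im) := by
  intro z₀ hz₀ him₀
  set G : ℂ → ℂ := fun z => z ^ 2 * f z - z ^ 2 - A * z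
  have hf_axis : ∀ᶠ y : ℝ in atTop, ‖f (-I * y)‖ ≤ C * Real.exp (A' * y) := by
    filter_upwards [eventually_ge_atTop 0] with y hy
    simpa [abs_of_nonneg hy] using hgrowth (-I * y)
  have hG : ‖G z₀‖ ≤ C₁ * Real.exp (-(2 * γ) * z₀.im) := by
    refine norm_le_mul_exp_lower_half_plane (by fun_prop)
      (norm_sq_mul_sub_le_exp hA'.le hgrowth A) hC₁ (fun c hc => ?_) him₀
    exact tendsto_norm_sq_mul_sub_mul_exp_neg (by linarith) (by linarith : (2 * γ + c) / 2 < c)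
      (eventually_norm_le_exp_of_limsup_le hf_axis htype (by linarith)) A
  have hGz₀ : G z₀ = -(z₀ * (z₀ + A)) := by
    simp only [G, hz₀]
    ring
  rw [← norm_neg, ← hGz₀]
  convert hG using 3
  ring

theorem stmt11 (γ : ℝ) (hγ : 0 < γ) (f : ℂ → ℂ) (hf : Differentiable ℂ f)
    (C A' : ℝ) (hC : 0 < C) (hA' : 0 < A')
    (hgrowth : ∀ z : ℂ, ‖f z‖ ≤ C * Real.exp (A' * ‖z‖))
    (htype : limsup (fun y : ℝ => Real.log ‖f (-Complex.I * (y : ℂ))‖ / y) atTop ≤ 2 * γ)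
    (A : ℂ) (C₁ : ℝ)
    (hC₁ : ∀ x : ℝ, ‖(x : ℂ) ^ 2 * f x - (x : ℂ) ^ 2 - A * (x : ℂ)‖ ≤ C₁) :
    ∀ z₀ : ℂ, f z₀ = 0 → z₀.im ≤ 0 →
      ‖z₀ * (z₀ + A)‖ ≤ C₁ * Real.exp (-2 * γ * z₀.im) :=
  stmt11_general γ hγ f hf C A' hA' hgrowth htype A C₁ hC₁
end
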